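/- arXiv:2405.04335 — 3 statements merged into one kernel-verified Lean document; each statement's English description precedes it below -/
import Mathlib

section
/- Let (Y_i)_{i≥1} be i.i.d. nonnegative random variables with E[Y_1]=1 and finite moments of all orders. Then for every q ≥ 1 there is a constant C_q (depending only on q and the law of Y_1) such that for every sequence (α_i)_{i≥1} of nonnegative reals with Σ_i α_i ≤ 1, one has P(Σ_i α_i Y_i ≥ 2) ≤ C_q · (max_i α_i)^q. -/
/-!
Let `a = sup α` and truncate each summand `α i * Y i` at `ε = √a`. By Markov's inequality with
`p = 2 (q + 1)`, some summand exceeds `ε` with probability at most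
`∑ α i ^ p E[Y^p] / ε^p ≤ E[Y^p] a^q`, since `α i ^ p ≤ a ^ (p - 1) α i` and `∑ α i ≤ 1`.
The truncated summands are independent, bounded by `ε` and have total mean at most `1`, so the
Chernoff bound at `t = (4 ε)⁻¹` shows that their sum exceeds `3/2` with probability at most
`exp (-(16 ε)⁻¹) ≤ (32 q)^(2q) a^q`. The event `2 ≤ ∑' i, α i * Y i` is covered by the
increasing events `3/2 ≤ ∑ i < n, α i * Y i`.
-/

open MeasureTheory ProbabilityTheory Real Finset

lemma exp_le_one_add_mul_of_le {x δ : ℝ} (hx : 0 ≤ x) (hxδ : x ≤ δ) (hδ : δ ≤ 1) :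
    exp x ≤ 1 + (1 + δ) * x := by
  have h := (abs_le.mp (abs_exp_sub_one_sub_id_le (x := x)
    (by rw [abs_of_nonneg hx]; linarith))).2
  nlinarith [mul_le_mul_of_nonneg_left hxδ hx]

lemma exp_neg_le_div_rpow {x r : ℝ} (hx : 0 < x) (hr : 0 < r) : exp (-x) ≤ (r / x) ^ r := by
  have h := log_le_sub_one_of_pos (div_pos hx hr)
  rw [log_div hx.ne' hr.ne', le_sub_iff_add_le, le_div_iff₀ hr] at h
  rw [rpow_def_of_pos (div_pos hr hx), exp_le_exp, log_div hr.ne' hx.ne']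
  nlinarith

lemma sqrt_rpow_two_mul {a : ℝ} (ha : 0 ≤ a) (r : ℝ) : √a ^ (2 * r) = a ^ r := by
  rw [← rpow_div_two_eq_sqrt _ ha, mul_div_cancel_left₀ r two_ne_zero]

lemma exp_neg_inv_sixteen_mul_sqrt_le {a q : ℝ} (ha : 0 < a) (hq : 0 < q) :
    exp (-(16 * √a)⁻¹) ≤ (32 * q) ^ (2 * q) * a ^ q := by
  calc exp (-(16 * √a)⁻¹) ≤ (2 * q / (16 * √a)⁻¹) ^ (2 * q) :=
        exp_neg_le_div_rpow (by positivity) (by positivity)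
    _ = (32 * q) ^ (2 * q) * a ^ q := by
        rw [← sqrt_rpow_two_mul ha.le, ← mul_rpow (by positivity) (sqrt_nonneg a)]
        congr 1
        field_simp
        ring

lemma rpow_le_rpow_sub_one_mul {x a p : ℝ} (hx : 0 ≤ x) (hxa : x ≤ a) (hp : 1 ≤ p) :
    x ^ p ≤ a ^ (p - 1) * x := by
  calc x ^ p = x ^ (p - 1) * x ^ (1 : ℝ) := by
        rw [← rpow_add' hx (by linarith), sub_add_cancel]
    _ ≤ a ^ (p - 1) * x := by
        rw [rpow_one]; gcongr

section

variable {Ω ι : Type*}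

lemma setOf_le_sum_subset_union_min (X : ι → Ω → ℝ) (s : Finset ι) (c ε : ℝ) :
    {ω | c ≤ ∑ i ∈ s, X i ω} ⊆
      (⋃ i ∈ s, {ω | ε < X i ω}) ∪ {ω | c ≤ ∑ i ∈ s, min (X i ω) ε} := by
  intro ω hω
  by_cases h : ∃ i ∈ s, ε < X i ω
  · left
    simpa using h
  · right
    simp only [not_exists, not_and, not_lt] at h
    simpa only [Set.mem_ofPred_eq, sum_congr rfl fun i hi => min_eq_left (h i hi)] using hω

variable [MeasurableSpace Ω] {μ : Measure Ω}

lemma measure_lt_le_integral_rpow_div [IsFiniteMeasure μ] {X : Ω → ℝ} (hX : ∀ ω, 0 ≤ X ω)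
    {p c : ℝ} (hp : 0 ≤ p) (hc : 0 < c) (hint : Integrable (fun ω => X ω ^ p) μ) :
    μ {ω | c < X ω} ≤ ENNReal.ofReal ((∫ ω, X ω ^ p ∂μ) / c ^ p) := by
  have hcp : 0 < c ^ p := rpow_pos_of_pos hc p
  have hmarkov := mul_meas_ge_le_integral_of_nonneg
    (Filter.Eventually.of_forall fun ω => rpow_nonneg (hX ω) p) hint (c ^ p)
  calc μ {ω | c < X ω} ≤ μ {ω | c ^ p ≤ X ω ^ p} :=
        measure_mono fun ω hω => rpow_le_rpow hc.le hω.le hp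
    _ = ENNReal.ofReal (μ.real {ω | c ^ p ≤ X ω ^ p}) :=
        (ofReal_measureReal (measure_ne_top _ _)).symm
    _ ≤ ENNReal.ofReal ((∫ ω, X ω ^ p ∂μ) / c ^ p) := by
        gcongr
        rw [le_div_iff₀ hcp, mul_comm]
        exact hmarkov

lemma measure_le_tsum_le_of_forall_range {f : ℕ → Ω → ℝ} (hf : ∀ i ω, 0 ≤ f i ω) {b c : ℝ}
    (hcb : c < b) {B : ENNReal} (h : ∀ n, μ {ω | c ≤ ∑ i ∈ range n, f i ω} ≤ B) :
    μ {ω | b ≤ ∑' i, f i ω} ≤ B := by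
  have hsub : {ω | b ≤ ∑' i, f i ω} ⊆ ⋃ n, {ω | c ≤ ∑ i ∈ range n, f i ω} := by
    intro ω hω
    by_cases hsumm : Summable fun i => f i ω
    · obtain ⟨n, hn⟩ := (hsumm.hasSum.tendsto_sum_nat.eventually_const_le
        (lt_of_lt_of_le hcb hω)).exists
      exact Set.mem_iUnion.mpr ⟨n, hn⟩
    · refine Set.mem_iUnion.mpr ⟨0, ?_⟩
      have : b ≤ 0 := by simpa [tsum_eq_zero_of_not_summable hsumm] using hω
      simp only [range_zero, sum_empty, Set.mem_ofPred_eq]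
      linarith
  have hmono : Monotone fun n => {ω | c ≤ ∑ i ∈ range n, f i ω} := fun m n hmn ω hω =>
    le_trans hω (sum_le_sum_of_subset_of_nonneg (range_subset_range.mpr hmn)
      fun i _ _ => hf i ω)
  calc μ {ω | b ≤ ∑' i, f i ω} ≤ μ (⋃ n, {ω | c ≤ ∑ i ∈ range n, f i ω}) := measure_mono hsub
    _ = ⨆ n, μ {ω | c ≤ ∑ i ∈ range n, f i ω} := hmono.measure_iUnion
    _ ≤ B := iSup_le h

lemma mgf_le_exp_of_nonneg_of_le [IsProbabilityMeasure μ] {Z : Ω → ℝ} (hZm : Measurable Z)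
    {ε t : ℝ} (hZ0 : ∀ ω, 0 ≤ Z ω) (hZε : ∀ ω, Z ω ≤ ε) (ht : 0 ≤ t) (htε : t * ε ≤ 1) :
    mgf Z μ t ≤ exp ((1 + t * ε) * (t * μ[Z])) := by
  have hZint : Integrable Z μ := Integrable.of_bound hZm.aestronglyMeasurable ε
    (Filter.Eventually.of_forall fun ω => by rw [norm_of_nonneg (hZ0 ω)]; exact hZε ω)
  calc mgf Z μ t = ∫ ω, exp (t * Z ω) ∂μ := rfl
    _ ≤ ∫ ω, 1 + (1 + t * ε) * (t * Z ω) ∂μ := by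
        refine integral_mono_of_nonneg (Filter.Eventually.of_forall fun ω => (exp_pos _).le)
          ((integrable_const 1).add ((hZint.const_mul t).const_mul _))
          (Filter.Eventually.of_forall fun ω => exp_le_one_add_mul_of_le
            (mul_nonneg ht (hZ0 ω)) (mul_le_mul_of_nonneg_left (hZε ω) ht) htε)
    _ = 1 + (1 + t * ε) * (t * μ[Z]) := by
        rw [integral_add (integrable_const 1) ((hZint.const_mul t).const_mul _),
          integral_const_mul, integral_const_mul]
        simp
    _ ≤ exp ((1 + t * ε) * (t * μ[Z])) := by
        linarith [add_one_le_exp ((1 + t * ε) * (t * μ[Z]))]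

lemma ProbabilityTheory.iIndepFun.measure_sum_ge_le_exp_mul_prod_mgf [IsFiniteMeasure μ]
    {X : ι → Ω → ℝ} (h_indep : iIndepFun X μ) (h_meas : ∀ i, Measurable (X i))
    {s : Finset ι} {t : ℝ} (ht : 0 ≤ t) (h_int : ∀ i ∈ s, Integrable (fun ω => exp (t * X i ω)) μ) (x : ℝ) :
    μ.real {ω | x ≤ ∑ i ∈ s, X i ω} ≤ exp (-t * x) * ∏ i ∈ s, mgf (X i) μ t := by
  rw [← h_indep.mgf_sum h_meas]
  simpa only [Finset.sum_apply] using
    measure_ge_le_exp_mul_mgf x ht (h_indep.integrable_exp_mul_sum h_meas h_int)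

/-- Chernoff's bound at `t = (4 ε)⁻¹`. -/
lemma measure_sum_min_ge_le [IsProbabilityMeasure μ] {X : ι → Ω → ℝ}
    (h_indep : iIndepFun X μ) (h_meas : ∀ i, Measurable (X i)) (hX0 : ∀ i ω, 0 ≤ X i ω)
    (h_int : ∀ i, Integrable (X i) μ) {s : Finset ι} (hs : ∑ i ∈ s, μ[X i] ≤ 1)
    {ε : ℝ} (hε : 0 < ε) :
    μ.real {ω | 3 / 2 ≤ ∑ i ∈ s, min (X i ω) ε} ≤ exp (-(16 * ε)⁻¹) := by
  set t := (4 * ε)⁻¹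
  set Z : ι → Ω → ℝ := fun i ω => min (X i ω) ε
  have ht : 0 ≤ t := by positivity
  have htε : t * ε = 1 / 4 := by simp only [t]; field_simp
  have hZm : ∀ i, Measurable (Z i) := fun i => (h_meas i).min measurable_const
  have hZ_indep : iIndepFun Z μ :=
    h_indep.comp (fun _ x => min x ε) fun _ => measurable_id.min measurable_const
  have hZ0 : ∀ i ω, 0 ≤ Z i ω := fun i ω => le_min (hX0 i ω) hε.le
  have hZε : ∀ i ω, Z i ω ≤ ε := fun i ω => min_le_right _ _
  have hexp_int : ∀ i ∈ s, Integrable (fun ω => exp (t * Z i ω)) μ := fun i _ =>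
    Integrable.of_bound ((hZm i).const_mul t).exp.aestronglyMeasurable (exp (t * ε))
      (Filter.Eventually.of_forall fun ω => by
        rw [norm_of_nonneg (exp_pos _).le, exp_le_exp]
        exact mul_le_mul_of_nonneg_left (hZε i ω) ht)
  have hmgf : ∀ i, mgf (Z i) μ t ≤ exp (5 / 4 * t * μ[X i]) := fun i => by
    have hZX : μ[Z i] ≤ μ[X i] := integral_mono_of_nonneg
      (Filter.Eventually.of_forall (hZ0 i)) (h_int i)
      (Filter.Eventually.of_forall fun ω => min_le_left _ _)
    refine (mgf_le_exp_of_nonneg_of_le (hZm i) (hZ0 i) (hZε i) ht (by linarith)).trans ?_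
    rw [exp_le_exp, htε]
    nlinarith
  calc μ.real {ω | 3 / 2 ≤ ∑ i ∈ s, Z i ω}
      ≤ exp (-t * (3 / 2)) * ∏ i ∈ s, mgf (Z i) μ t :=
        hZ_indep.measure_sum_ge_le_exp_mul_prod_mgf hZm ht hexp_int _
    _ ≤ exp (-t * (3 / 2)) * ∏ i ∈ s, exp (5 / 4 * t * μ[X i]) := by
        gcongr with i
        · exact fun i _ => mgf_nonneg
        · exact hmgf i
    _ = exp (-t * (3 / 2) + 5 / 4 * t * ∑ i ∈ s, μ[X i]) := by
        rw [← exp_sum, ← exp_add, mul_sum]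
    _ ≤ exp (-(16 * ε)⁻¹) := by
        rw [exp_le_exp]
        have ht16 : (16 * ε)⁻¹ = t / 4 := by simp only [t]; field_simp; ring
        nlinarith

lemma measure_sum_ge_le_sum_measure_lt_add [IsProbabilityMeasure μ] {X : ι → Ω → ℝ}
    (h_indep : iIndepFun X μ) (h_meas : ∀ i, Measurable (X i)) (hX0 : ∀ i ω, 0 ≤ X i ω)
    (h_int : ∀ i, Integrable (X i) μ) {s : Finset ι} (hs : ∑ i ∈ s, μ[X i] ≤ 1)
    {ε : ℝ} (hε : 0 < ε) :
    μ {ω | 3 / 2 ≤ ∑ i ∈ s, X i ω} ≤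
      ∑ i ∈ s, μ {ω | ε < X i ω} + ENNReal.ofReal (exp (-(16 * ε)⁻¹)) := by
  calc μ {ω | 3 / 2 ≤ ∑ i ∈ s, X i ω}
      ≤ μ ((⋃ i ∈ s, {ω | ε < X i ω}) ∪ {ω | 3 / 2 ≤ ∑ i ∈ s, min (X i ω) ε}) :=
        measure_mono (setOf_le_sum_subset_union_min X s _ ε)
    _ ≤ μ (⋃ i ∈ s, {ω | ε < X i ω}) + μ {ω | 3 / 2 ≤ ∑ i ∈ s, min (X i ω) ε} :=
        measure_union_le _ _
    _ ≤ ∑ i ∈ s, μ {ω | ε < X i ω} + ENNReal.ofReal (exp (-(16 * ε)⁻¹)) := by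
        gcongr
        · exact measure_biUnion_finset_le _ _
        · rw [← ofReal_measureReal (measure_ne_top _ _)]
          exact ENNReal.ofReal_le_ofReal (measure_sum_min_ge_le h_indep h_meas hX0 h_int hs hε)

lemma measure_sqrt_lt_mul_le [IsFiniteMeasure μ] {Y : Ω → ℝ} (hY0 : ∀ ω, 0 ≤ Y ω) {q M : ℝ}
    (hq : 0 < q) (h_mom : Integrable (fun ω => Y ω ^ (2 * (q + 1))) μ)
    (hM : ∫ ω, Y ω ^ (2 * (q + 1)) ∂μ ≤ M) {α a : ℝ} (hα0 : 0 ≤ α) (ha : 0 < a) (hαa : α ≤ a) :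
    μ {ω | √a < α * Y ω} ≤ ENNReal.ofReal (M * a ^ q * α) := by
  set p := 2 * (q + 1)
  have hαp : α ^ p ≤ a ^ q * a ^ (q + 1) * α := by
    rw [← rpow_add ha]
    convert rpow_le_rpow_sub_one_mul hα0 hαa (by linarith : 1 ≤ p) using 3
    ring
  refine (measure_lt_le_integral_rpow_div (p := p) (fun ω => mul_nonneg hα0 (hY0 ω))
    (by positivity) (sqrt_pos.2 ha)
    (by simpa only [mul_rpow hα0 (hY0 _)] using h_mom.const_mul (α ^ p))).trans ?_
  simp only [mul_rpow hα0 (hY0 _), integral_const_mul, p, sqrt_rpow_two_mul ha.le]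
  gcongr
  rw [div_le_iff₀ (by positivity)]
  calc α ^ p * ∫ ω, Y ω ^ p ∂μ ≤ a ^ q * a ^ (q + 1) * α * M :=
        mul_le_mul hαp hM (integral_nonneg fun ω => rpow_nonneg (hY0 ω) _) (by positivity)
    _ = M * a ^ q * α * a ^ (q + 1) := by ring

lemma measure_weighted_sum_ge_le [IsProbabilityMeasure μ] {Y : ι → Ω → ℝ}
    (h_indep : iIndepFun Y μ) (h_meas : ∀ i, Measurable (Y i)) (hY0 : ∀ i ω, 0 ≤ Y i ω)
    (h_int : ∀ i, Integrable (Y i) μ) (h_mean : ∀ i, μ[Y i] ≤ 1) {q M : ℝ} (hq : 0 < q)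
    (h_mom : ∀ i, Integrable (fun ω => Y i ω ^ (2 * (q + 1))) μ)
    (hM : ∀ i, ∫ ω, Y i ω ^ (2 * (q + 1)) ∂μ ≤ M) (hM0 : 0 ≤ M)
    {α : ι → ℝ} {a : ℝ} (hα0 : ∀ i, 0 ≤ α i) (ha : 0 < a) (hαa : ∀ i, α i ≤ a)
    {s : Finset ι} (hs : ∑ i ∈ s, α i ≤ 1) :
    μ {ω | 3 / 2 ≤ ∑ i ∈ s, α i * Y i ω} ≤
      ENNReal.ofReal ((M + (32 * q) ^ (2 * q)) * a ^ q) := by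
  have hX0 : ∀ i ω, 0 ≤ α i * Y i ω := fun i ω => mul_nonneg (hα0 i) (hY0 i ω)
  have h_mean_sum : ∑ i ∈ s, μ[fun ω => α i * Y i ω] ≤ 1 := by
    simp_rw [integral_const_mul]
    exact (sum_le_sum fun i _ => mul_le_of_le_one_right (hα0 i) (h_mean i)).trans hs
  refine (measure_sum_ge_le_sum_measure_lt_add (h_indep.comp (fun i x => α i * x)
    fun i => measurable_const.mul measurable_id) (fun i => (h_meas i).const_mul (α i)) hX0
    (fun i => (h_int i).const_mul (α i)) h_mean_sum (sqrt_pos.2 ha)).trans ?_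
  calc ∑ i ∈ s, μ {ω | √a < α i * Y i ω} + ENNReal.ofReal (exp (-(16 * √a)⁻¹))
      ≤ ENNReal.ofReal (M * a ^ q * ∑ i ∈ s, α i) +
          ENNReal.ofReal ((32 * q) ^ (2 * q) * a ^ q) := by
        rw [mul_sum, ENNReal.ofReal_sum_of_nonneg fun i _ => by have := hα0 i; positivity]
        gcongr with i
        · exact measure_sqrt_lt_mul_le (hY0 i) hq (h_mom i) (hM i) (hα0 i) ha (hαa i)
        · exact exp_neg_inv_sixteen_mul_sqrt_le ha hq
    _ ≤ ENNReal.ofReal (M * a ^ q) + ENNReal.ofReal ((32 * q) ^ (2 * q) * a ^ q) := by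
        gcongr ENNReal.ofReal ?_ + _
        exact mul_le_of_le_one_right (by positivity) hs
    _ = ENNReal.ofReal ((M + (32 * q) ^ (2 * q)) * a ^ q) := by
        rw [← ENNReal.ofReal_add (by positivity) (by positivity), add_mul]

end

/-- For i.i.d. nonnegative random variables `Y` with mean one and
finite moments of all orders, for every `q ≥ 1` there is a constant `C` such that
for all nonnegative weights `α` with `∑ α i ≤ 1`,
`P(∑ α i * Y i ≥ 2) ≤ C * (sup α)^q`. -/
theorem statement0
    {Ω : Type*} [MeasurableSpace Ω] (μ : Measure Ω) [IsProbabilityMeasure μ]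
    (Y : ℕ → Ω → ℝ)
    (hmeas : ∀ i, Measurable (Y i))
    (hindep : iIndepFun Y μ)
    (hident : ∀ i, IdentDistrib (Y i) (Y 0) μ μ)
    (hnonneg : ∀ i ω, 0 ≤ Y i ω)
    (hmean : ∫ ω, Y 0 ω ∂μ = 1)
    (hmom : ∀ p : ℝ, 1 ≤ p → Integrable (fun ω => Y 0 ω ^ p) μ) :
    ∀ q : ℝ, 1 ≤ q → ∃ C : ℝ, 0 < C ∧
      ∀ α : ℕ → ℝ, (∀ i, 0 ≤ α i) → (∑' i, α i) ≤ 1 → Summable α →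
        μ {ω | 2 ≤ ∑' i, α i * Y i ω} ≤ ENNReal.ofReal (C * (⨆ i, α i) ^ q) := by
  intro q hq
  set p := 2 * (q + 1)
  set M := ∫ ω, Y 0 ω ^ p ∂μ
  have hident_p : ∀ i, IdentDistrib (fun ω => Y i ω ^ p) (fun ω => Y 0 ω ^ p) μ μ :=
    fun i => (hident i).comp (measurable_id.pow_const p)
  have hM0 : 0 ≤ M := integral_nonneg fun ω => rpow_nonneg (hnonneg 0 ω) p
  refine ⟨M + (32 * q) ^ (2 * q), by positivity, fun α hα hsum hsumm => ?_⟩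
  have hα1 : ∀ i, α i ≤ 1 := fun i => (hsumm.le_tsum i fun j _ => hα j).trans hsum
  have hαa : ∀ i, α i ≤ ⨆ i, α i := le_ciSup ⟨1, Set.forall_mem_range.2 hα1⟩
  rcases (hα 0).trans (hαa 0) |>.eq_or_lt with ha | ha
  · have hα_zero : ∀ i, α i = 0 := fun i => le_antisymm (ha ▸ hαa i) (hα i)
    have hempty : {ω | (2 : ℝ) ≤ ∑' i, α i * Y i ω} = ∅ := by ext; norm_num [hα_zero]
    simp [hempty]
  refine measure_le_tsum_le_of_forall_range (fun i ω => mul_nonneg (hα i) (hnonneg i ω))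
    (by norm_num : (3 / 2 : ℝ) < 2) fun n => ?_
  exact measure_weighted_sum_ge_le hindep hmeas hnonneg
    (fun i => (hident i).integrable_iff.2 (by simpa using hmom 1 le_rfl))
    (fun i => ((hident i).integral_eq.trans hmean).le) (by linarith)
    (fun i => (hident_p i).integrable_iff.2 (hmom p (by linarith)))
    (fun i => (hident_p i).integral_eq.le) hM0 hα ha hαa
    ((hsumm.sum_le_tsum _ fun i _ => hα i).trans hsum)
end

section
/- Let (Y_i)_{i≥1} be i.i.d. nonnegative random variables with E[Y_1]=1 and E[Y_1^2] < ∞. For nonnegative reals (α_i) with Σ_i α_i ≤ 1, set α_max := max_i α_i and λ := α_max^{-1/2}. Then E[exp(λ Σ_i ((α_i Y_i) ∧ √α_max) − 2λ)] ≤ exp(E[Y_1^2] − α_max^{-1/2}). -/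
/-!
With `λ = α_max^{-1/2}` every truncated summand `λ ((α_i Y_i) ∧ √α_max)` lies in `[0, 1]`,
where `e^u ≤ 1 + u + u²`. So each factor of the (independent) moment generating function is at
most `exp (λ α_i + λ² α_i² E[Y²])`, and `λ² α_i ≤ 1` turns this into `exp ((λ + E[Y²]) α_i)`.
Multiplying over `i < n` and using `Σ α_i ≤ 1` bounds the partial sums by `exp (λ + E[Y²])`;
Fatou's lemma passes to the full series.
-/

open MeasureTheory ProbabilityTheory Filter Finset

lemma Real.exp_le_one_add_add_sq {u : ℝ} (hu : u ≤ 1) : Real.exp u ≤ 1 + u + u ^ 2 := by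
  by_cases h : -1 ≤ u
  · have := (abs_le.1 (Real.abs_exp_sub_one_sub_id_le (abs_le.2 ⟨h, hu⟩))).2
    linarith
  · have := Real.exp_lt_one_iff.2 (by linarith : u < 0)
    nlinarith

lemma Real.rpow_neg_half_mul_sqrt_le_one (x : ℝ) : x ^ (-(1 : ℝ) / 2) * √x ≤ 1 := by
  rcases le_or_gt x 0 with hx | hx
  · simp [Real.sqrt_eq_zero'.2 hx]
  · rw [Real.sqrt_eq_rpow, ← Real.rpow_add hx]
    norm_num

lemma le_liminf_comp_sum_range_of_nonneg {β : Type*} [CompleteLinearOrder β] [TopologicalSpace β]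
    [OrderTopology β] {g : ℝ → β} (hg_mono : Monotone g) (hg_cont : Continuous g) {a : ℕ → ℝ}
    (ha : ∀ i, 0 ≤ a i) :
    g (∑' i, a i) ≤ liminf (fun n => g (∑ i ∈ range n, a i)) atTop := by
  by_cases hsumm : Summable a
  · exact ((hg_cont.tendsto _).comp hsumm.hasSum.tendsto_sum_nat).liminf_eq.ge
  · rw [tsum_eq_zero_of_not_summable hsumm]
    exact le_liminf_of_le (by isBoundedDefault)
      (Eventually.of_forall fun n => hg_mono (sum_nonneg fun i _ => ha i))

section

variable {Ω : Type*} [MeasurableSpace Ω] {μ : Measure Ω}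

lemma integral_exp_le_exp_integral_add_integral_sq [IsProbabilityMeasure μ] {X : Ω → ℝ}
    (hX : Integrable X μ) (hX_sq : Integrable (fun ω => X ω ^ 2) μ) (hX_le : ∀ ω, X ω ≤ 1) :
    ∫ ω, Real.exp (X ω) ∂μ ≤ Real.exp (∫ ω, X ω ∂μ + ∫ ω, X ω ^ 2 ∂μ) := by
  have hexp : Integrable (fun ω => Real.exp (X ω)) μ :=
    Integrable.of_bound (Real.continuous_exp.comp_aestronglyMeasurable hX.1) (Real.exp 1)
      (ae_of_all _ fun ω => by
        rw [Real.norm_of_nonneg (Real.exp_pos _).le]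
        exact Real.exp_le_exp.2 (hX_le ω))
  have h1X : Integrable (fun ω => 1 + X ω) μ := (integrable_const 1).add hX
  calc ∫ ω, Real.exp (X ω) ∂μ ≤ ∫ ω, (1 + X ω + X ω ^ 2) ∂μ :=
        integral_mono hexp (h1X.add hX_sq) fun ω => Real.exp_le_one_add_add_sq (hX_le ω)
    _ = 1 + ∫ ω, X ω ∂μ + ∫ ω, X ω ^ 2 ∂μ := by
        rw [integral_add h1X hX_sq, integral_add (integrable_const 1) hX]
        simp
    _ ≤ Real.exp (∫ ω, X ω ∂μ + ∫ ω, X ω ^ 2 ∂μ) := by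
        linarith [Real.add_one_le_exp (∫ ω, X ω ∂μ + ∫ ω, X ω ^ 2 ∂μ)]

lemma mgf_min_mul_le [IsProbabilityMeasure μ] {Y : Ω → ℝ} (hY_meas : Measurable Y)
    (hY_nonneg : ∀ ω, 0 ≤ Y ω) (hY_mean : ∫ ω, Y ω ∂μ ≤ 1)
    (hY_sq : Integrable (fun ω => Y ω ^ 2) μ) {a c t : ℝ} (ha : 0 ≤ a) (hc : 0 ≤ c)
    (ht : 0 ≤ t) (htc : t * c ≤ 1) (hac : a ≤ c ^ 2) :
    mgf (fun ω => min (a * Y ω) c) μ t ≤ Real.exp ((t + ∫ ω, Y ω ^ 2 ∂μ) * a) := by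
  set T := fun ω => min (a * Y ω) c
  have hT_nonneg ω : 0 ≤ T ω := le_min (mul_nonneg ha (hY_nonneg ω)) hc
  have hT_le_mul ω : T ω ≤ a * Y ω := min_le_left _ _
  have hT_le ω : T ω ≤ c := min_le_right _ _
  have hT_meas : Measurable T := (hY_meas.const_mul a).min measurable_const
  have hY_int : Integrable Y μ :=
    ((memLp_two_iff_integrable_sq hY_meas.aestronglyMeasurable).2 hY_sq).integrable one_le_two
  have hT_int : Integrable T μ := Integrable.of_bound hT_meas.aestronglyMeasurable c
    (ae_of_all _ fun ω => by rw [Real.norm_of_nonneg (hT_nonneg ω)]; exact hT_le ω)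
  have hT_sq_int : Integrable (fun ω => T ω ^ 2) μ :=
    Integrable.of_bound (hT_meas.pow_const 2).aestronglyMeasurable (c ^ 2)
      (ae_of_all _ fun ω => by
        rw [Real.norm_of_nonneg (sq_nonneg _)]
        exact pow_le_pow_left₀ (hT_nonneg ω) (hT_le ω) 2)
  have hT_mean : ∫ ω, T ω ∂μ ≤ a := calc
    ∫ ω, T ω ∂μ ≤ ∫ ω, a * Y ω ∂μ := integral_mono hT_int (hY_int.const_mul a) hT_le_mul
    _ = a * ∫ ω, Y ω ∂μ := integral_const_mul _ _
    _ ≤ a := mul_le_of_le_one_right ha hY_mean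
  have hT_sq : ∫ ω, T ω ^ 2 ∂μ ≤ a ^ 2 * ∫ ω, Y ω ^ 2 ∂μ := calc
    ∫ ω, T ω ^ 2 ∂μ ≤ ∫ ω, a ^ 2 * Y ω ^ 2 ∂μ :=
      integral_mono hT_sq_int (hY_sq.const_mul _) fun ω => by
        rw [← mul_pow]; exact pow_le_pow_left₀ (hT_nonneg ω) (hT_le_mul ω) 2
    _ = a ^ 2 * ∫ ω, Y ω ^ 2 ∂μ := integral_const_mul _ _
  have hta : t ^ 2 * a ≤ 1 := calc
    t ^ 2 * a ≤ (t * c) ^ 2 := by rw [mul_pow]; exact mul_le_mul_of_nonneg_left hac (sq_nonneg t)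
    _ ≤ 1 := pow_le_one₀ (mul_nonneg ht hc) htc
  have hm : 0 ≤ ∫ ω, Y ω ^ 2 ∂μ := integral_nonneg fun ω => sq_nonneg _
  calc mgf T μ t ≤ Real.exp (∫ ω, t * T ω ∂μ + ∫ ω, (t * T ω) ^ 2 ∂μ) :=
        integral_exp_le_exp_integral_add_integral_sq (hT_int.const_mul t)
          (by simpa only [mul_pow] using hT_sq_int.const_mul (t ^ 2))
          fun ω => (mul_le_mul_of_nonneg_left (hT_le ω) ht).trans htc
    _ = Real.exp (t * ∫ ω, T ω ∂μ + t ^ 2 * ∫ ω, T ω ^ 2 ∂μ) := by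
        simp only [mul_pow, integral_const_mul]
    _ ≤ Real.exp ((t + ∫ ω, Y ω ^ 2 ∂μ) * a) := by
        refine Real.exp_le_exp.2 ?_
        nlinarith [mul_le_mul_of_nonneg_left hT_mean ht,
          mul_le_mul_of_nonneg_left hT_sq (sq_nonneg t),
          mul_le_mul_of_nonneg_right hta (mul_nonneg ha hm)]

lemma mgf_tsum_le_of_forall_mgf_sum_range_le {T : ℕ → Ω → ℝ} (hT_meas : ∀ i, Measurable (T i))
    (hT_nonneg : ∀ i ω, 0 ≤ T i ω) {t C : ℝ} (ht : 0 ≤ t)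
    (hT_int : ∀ n, Integrable (fun ω => Real.exp (t * (∑ i ∈ range n, T i) ω)) μ)
    (hC : ∀ n, mgf (∑ i ∈ range n, T i) μ t ≤ C) :
    mgf (fun ω => ∑' i, T i ω) μ t ≤ C := by
  have hC0 : 0 ≤ C := mgf_nonneg.trans (hC 0)
  by_cases hint : Integrable (fun ω => Real.exp (t * ∑' i, T i ω)) μ
  swap
  · rw [mgf, integral_undef hint]
    exact hC0
  set g : ℝ → ENNReal := fun x => ENNReal.ofReal (Real.exp (t * x))
  have hg_mono : Monotone g := fun x y hxy =>
    ENNReal.ofReal_le_ofReal (Real.exp_le_exp.2 (mul_le_mul_of_nonneg_left hxy ht))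
  have hg_cont : Continuous g :=
    ENNReal.continuous_ofReal.comp (Real.continuous_exp.comp (continuous_const.mul continuous_id))
  have hpartial n :
      ∫⁻ ω, g (∑ i ∈ range n, T i ω) ∂μ = ENNReal.ofReal (mgf (∑ i ∈ range n, T i) μ t) := by
    rw [mgf, ofReal_integral_eq_lintegral_ofReal (hT_int n)
      (ae_of_all _ fun ω => (Real.exp_pos _).le)]
    simp only [g, Finset.sum_apply]
  rw [← ENNReal.ofReal_le_ofReal_iff hC0, mgf,
    ofReal_integral_eq_lintegral_ofReal hint (ae_of_all _ fun ω => (Real.exp_pos _).le)]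
  calc ∫⁻ ω, g (∑' i, T i ω) ∂μ
      ≤ ∫⁻ ω, liminf (fun n => g (∑ i ∈ range n, T i ω)) atTop ∂μ :=
        lintegral_mono fun ω => le_liminf_comp_sum_range_of_nonneg hg_mono hg_cont (hT_nonneg · ω)
    _ ≤ liminf (fun n => ∫⁻ ω, g (∑ i ∈ range n, T i ω) ∂μ) atTop :=
        lintegral_liminf_le fun n =>
          hg_cont.measurable.comp (Finset.measurable_sum _ fun i _ => hT_meas i)
    _ ≤ ENNReal.ofReal C := liminf_le_of_frequently_le' (Frequently.of_forall fun n => by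
        rw [hpartial]; exact ENNReal.ofReal_le_ofReal (hC n))

lemma ProbabilityTheory.iIndepFun.min_mul_const {Y : ℕ → Ω → ℝ} (hY_indep : iIndepFun Y μ)
    (α : ℕ → ℝ) (c : ℝ) : iIndepFun (fun i ω => min (α i * Y i ω) c) μ :=
  hY_indep.comp (fun i x => min (α i * x) c) fun _ =>
    (measurable_id.const_mul _).min measurable_const

lemma mgf_sum_range_min_mul_le [IsProbabilityMeasure μ] {Y : ℕ → Ω → ℝ}
    (hY_meas : ∀ i, Measurable (Y i)) (hY_indep : iIndepFun Y μ)
    (hY_nonneg : ∀ i ω, 0 ≤ Y i ω) (hY_mean : ∀ i, ∫ ω, Y i ω ∂μ ≤ 1)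
    (hY_sq : ∀ i, Integrable (fun ω => Y i ω ^ 2) μ) {m : ℝ}
    (hm : ∀ i, ∫ ω, Y i ω ^ 2 ∂μ ≤ m) {α : ℕ → ℝ} {c t : ℝ} (hα : ∀ i, 0 ≤ α i)
    (hαc : ∀ i, α i ≤ c ^ 2) (hc : 0 ≤ c) (ht : 0 ≤ t) (htc : t * c ≤ 1) (n : ℕ) :
    mgf (∑ i ∈ range n, fun ω => min (α i * Y i ω) c) μ t ≤
      Real.exp ((t + m) * ∑ i ∈ range n, α i) := by
  have hT_meas i : Measurable fun ω => min (α i * Y i ω) c :=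
    ((hY_meas i).const_mul _).min measurable_const
  rw [(hY_indep.min_mul_const α c).mgf_sum hT_meas, mul_sum, Real.exp_sum]
  refine prod_le_prod (fun i _ => mgf_nonneg) fun i _ => ?_
  calc _ ≤ Real.exp ((t + ∫ ω, Y i ω ^ 2 ∂μ) * α i) :=
        mgf_min_mul_le (hY_meas i) (hY_nonneg i) (hY_mean i) (hY_sq i) (hα i) hc ht htc (hαc i)
    _ ≤ Real.exp ((t + m) * α i) := by gcongr; exacts [hα i, hm i]

lemma mgf_tsum_min_mul_le [IsProbabilityMeasure μ] {Y : ℕ → Ω → ℝ}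
    (hY_meas : ∀ i, Measurable (Y i)) (hY_indep : iIndepFun Y μ)
    (hY_nonneg : ∀ i ω, 0 ≤ Y i ω) (hY_mean : ∀ i, ∫ ω, Y i ω ∂μ ≤ 1)
    (hY_sq : ∀ i, Integrable (fun ω => Y i ω ^ 2) μ) {m : ℝ}
    (hm : ∀ i, ∫ ω, Y i ω ^ 2 ∂μ ≤ m) {α : ℕ → ℝ} {c t : ℝ} (hα : ∀ i, 0 ≤ α i)
    (hα_sum : ∀ n, ∑ i ∈ range n, α i ≤ 1) (hαc : ∀ i, α i ≤ c ^ 2) (hc : 0 ≤ c) (ht : 0 ≤ t)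
    (htc : t * c ≤ 1) :
    mgf (fun ω => ∑' i, min (α i * Y i ω) c) μ t ≤ Real.exp (t + m) := by
  have hT_meas i : Measurable fun ω => min (α i * Y i ω) c :=
    ((hY_meas i).const_mul _).min measurable_const
  have htm : 0 ≤ t + m := add_nonneg ht ((integral_nonneg fun ω => sq_nonneg (Y 0 ω)).trans (hm 0))
  refine mgf_tsum_le_of_forall_mgf_sum_range_le hT_meas
    (fun i ω => le_min (mul_nonneg (hα i) (hY_nonneg i ω)) hc) ht (fun n => ?_) fun n => ?_
  · refine (hY_indep.min_mul_const α c).integrable_exp_mul_sum hT_meas fun i _ =>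
      Integrable.of_bound (by fun_prop) (Real.exp 1) (ae_of_all _ fun ω => ?_)
    rw [Real.norm_of_nonneg (Real.exp_pos _).le, Real.exp_le_exp]
    exact (mul_le_mul_of_nonneg_left (min_le_right _ _) ht).trans htc
  · calc _ ≤ Real.exp ((t + m) * ∑ i ∈ range n, α i) :=
          mgf_sum_range_min_mul_le hY_meas hY_indep hY_nonneg hY_mean hY_sq hm hα hαc hc ht htc n
      _ ≤ Real.exp (t + m) := Real.exp_le_exp.2 (mul_le_of_le_one_right htm (hα_sum n))

end

theorem statement2_general
    {Ω : Type*} [MeasurableSpace Ω] (μ : Measure Ω) [IsProbabilityMeasure μ]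
    (Y : ℕ → Ω → ℝ)
    (hmeas : ∀ i, Measurable (Y i))
    (hindep : iIndepFun Y μ)
    (hident : ∀ i, IdentDistrib (Y i) (Y 0) μ μ)
    (hnonneg : ∀ i ω, 0 ≤ Y i ω)
    (hmean : ∫ ω, Y 0 ω ∂μ = 1)
    (hmom : Integrable (fun ω => Y 0 ω ^ 2) μ)
    (α : ℕ → ℝ) (hα : ∀ i, 0 ≤ α i) (hsum : (∑' i, α i) ≤ 1) (hαsumm : Summable α) :
    ∫ ω, Real.exp ((⨆ i, α i) ^ (-(1 : ℝ)/2) *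
        (∑' i, min (α i * Y i ω) (Real.sqrt (⨆ j, α j))) -
        2 * (⨆ i, α i) ^ (-(1 : ℝ)/2)) ∂μ ≤
      Real.exp ((∫ ω, Y 0 ω ^ 2 ∂μ) - (⨆ i, α i) ^ (-(1 : ℝ)/2)) := by
  set A := ⨆ i, α i
  set l := A ^ (-(1 : ℝ) / 2)
  have hbdd : BddAbove (Set.range α) :=
    ⟨1, Set.forall_mem_range.2 fun i => (hαsumm.le_tsum i fun j _ => hα j).trans hsum⟩
  have hA : 0 ≤ A := (hα 0).trans (le_ciSup hbdd 0)
  have hαA i : α i ≤ √A ^ 2 := by rw [Real.sq_sqrt hA]; exact le_ciSup hbdd i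
  have hl : 0 ≤ l := Real.rpow_nonneg hA _
  have hY_sq_ident i : IdentDistrib (fun ω => Y i ω ^ 2) (fun ω => Y 0 ω ^ 2) μ μ :=
    (hident i).comp (measurable_id.pow_const 2)
  have hmgf := mgf_tsum_min_mul_le hmeas hindep hnonneg
    (fun i => ((hident i).integral_eq.trans hmean).le)
    (fun i => (hY_sq_ident i).integrable_iff.2 hmom) (fun i => (hY_sq_ident i).integral_eq.le) hα
    (fun n => (hαsumm.sum_le_tsum _ fun i _ => hα i).trans hsum) hαA (Real.sqrt_nonneg A) hl
    (Real.rpow_neg_half_mul_sqrt_le_one A)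
  calc ∫ ω, Real.exp (l * ∑' i, min (α i * Y i ω) √A - 2 * l) ∂μ
      = mgf (fun ω => ∑' i, min (α i * Y i ω) √A) μ l / Real.exp (2 * l) := by
        simp_rw [Real.exp_sub]; exact integral_div _ _
    _ ≤ Real.exp (l + ∫ ω, Y 0 ω ^ 2 ∂μ) / Real.exp (2 * l) := by gcongr
    _ = Real.exp (∫ ω, Y 0 ω ^ 2 ∂μ - l) := by rw [← Real.exp_sub]; ring_nf

/-- exponential Chebyshev bound for the truncated weighted sum:
with `λ = (sup α)^{-1/2}`,
`E[exp(λ * ∑ min(α i * Y i, √(sup α)) − 2λ)] ≤ exp(E[Y²] − (sup α)^{-1/2})`. -/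
theorem statement2
    {Ω : Type*} [MeasurableSpace Ω] (μ : Measure Ω) [IsProbabilityMeasure μ]
    (Y : ℕ → Ω → ℝ)
    (hmeas : ∀ i, Measurable (Y i))
    (hindep : iIndepFun Y μ)
    (hident : ∀ i, IdentDistrib (Y i) (Y 0) μ μ)
    (hnonneg : ∀ i ω, 0 ≤ Y i ω)
    (hmean : ∫ ω, Y 0 ω ∂μ = 1)
    (hmom : Integrable (fun ω => Y 0 ω ^ 2) μ)
    (α : ℕ → ℝ) (hα : ∀ i, 0 ≤ α i) (hsum : (∑' i, α i) ≤ 1) (hαsumm : Summable α)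
    (hpos : 0 < ⨆ i, α i) :
    ∫ ω, Real.exp ((⨆ i, α i) ^ (-(1 : ℝ)/2) *
        (∑' i, min (α i * Y i ω) (Real.sqrt (⨆ j, α j))) -
        2 * (⨆ i, α i) ^ (-(1 : ℝ)/2)) ∂μ ≤
      Real.exp ((∫ ω, Y 0 ω ^ 2 ∂μ) - (⨆ i, α i) ^ (-(1 : ℝ)/2)) :=
  statement2_general μ Y hmeas hindep hident hnonneg hmean hmom α hα hsum hαsumm
end

section
/- Let (W_n)_{n≥0} be a nonnegative adapted process with W_0 = 1, let A > 1, τ := inf{n ≥ 1 : W_n ≥ A}, and suppose there exists κ ∈ (0, 1/2] such that, for every n ≥ 1, almost surely on {τ ≥ n}, P(τ ∈ [n, n + Θ_n − 1] | F_{n-1}) ≥ κ^{Θ_n}, where Θ_n is an F_{n-1}-measurable positive-integer random variable. Then for any exponent q with 2^{q/2}κ = κ^{-1}: Σ_{n≥1} E[(2^{1−Θ_n})^{q/2} 1_{τ ≥ n}] ≤ 2^{q/2} P(τ < ∞). -/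
/-!
On `{n ≤ τ}` the weight `κ ^ Θₙ` is `ℱ (n - 1)`-measurable and at most
`P(n ≤ τ ≤ n + Θₙ - 1 | ℱ (n - 1))`; multiplying by it and integrating gives
`E[κ ^ (2 Θₙ); n ≤ τ] ≤ E[κ ^ Θₙ; n ≤ τ ≤ n + Θₙ - 1] ≤ E[κ ^ (τ + 1 - n); n ≤ τ < ∞]`,
since `τ + 1 - n ≤ Θₙ` on that event. Because `2 ^ (q / 2) = κ⁻²`, the summand of the theorem is
`2 ^ (q / 2) E[κ ^ (2 Θₙ); n ≤ τ]`, and for fixed finite `τ` the weights `κ ^ (τ + 1 - n)`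
form a geometric series bounded by `κ / (1 - κ) ≤ 1`.
-/

open MeasureTheory ProbabilityTheory

lemma sInf_natCast_eq_hittingAfter {Ω β : Type*} (u : ℕ → Ω → β) (s : Set β) (k : ℕ) (ω : Ω) :
    sInf {t : ℕ∞ | ∃ n : ℕ, t = n ∧ k ≤ n ∧ u n ω ∈ s} = hittingAfter u s k ω := by
  have hset : {t : ℕ∞ | ∃ n : ℕ, t = n ∧ k ≤ n ∧ u n ω ∈ s} =
      (Nat.cast : ℕ → ℕ∞) '' {n | k ≤ n ∧ u n ω ∈ s} := by
    ext t; simp [eq_comm, and_comm]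
  classical
  rw [hset]
  dsimp only [hittingAfter]
  split_ifs with h
  · rw [sInf_image]
    exact (ENat.natCast_sInf h).symm
  · have hempty : {n | k ≤ n ∧ u n ω ∈ s} = ∅ :=
      Set.eq_empty_of_forall_notMem fun n hn => h ⟨n, hn⟩
    rw [hempty, Set.image_empty, sInf_empty]
    -- `⊤ : ℕ∞` against `⊤ : WithTop ℕ`
    rfl

namespace MeasureTheory.IsStoppingTime

variable {Ω : Type*} {m0 : MeasurableSpace Ω} {ℱ : Filtration ℕ m0} {τ : Ω → ℕ∞}

lemma measurableSet_natCast_le (hτ : IsStoppingTime ℱ τ) {n : ℕ} (hn : 1 ≤ n) :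
    MeasurableSet[ℱ (n - 1)] {ω | (n : ℕ∞) ≤ τ ω} := by
  have : {ω | (n : ℕ∞) ≤ τ ω} = {ω | τ ω ≤ ((n - 1 : ℕ) : ℕ∞)}ᶜ := by
    ext ω
    simp only [Set.mem_ofPred_eq, Set.mem_compl_iff]
    induction τ ω using ENat.recTopCoe with
    | top => simp
    | coe t =>
      norm_cast
      omega
  rw [this]
  exact (hτ.measurableSet_le (n - 1)).compl

lemma measurable_enat (hτ : IsStoppingTime ℱ τ) : Measurable τ :=
  ENat.measurable_iff.2 fun n => ℱ.le n _ (hτ.measurableSet_eq n)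

end MeasureTheory.IsStoppingTime

lemma setIntegral_sq_le_setIntegral_inter_of_le_condExp {Ω : Type*} {m m0 : MeasurableSpace Ω}
    {μ : Measure Ω} [IsFiniteMeasure μ] (hm : m ≤ m0) {f : Ω → ℝ} (hf : StronglyMeasurable[m] f)
    (hf0 : ∀ ω, 0 ≤ f ω) (hf1 : ∀ ω, f ω ≤ 1) {S E : Set Ω} (hS : MeasurableSet[m] S)
    (hE : MeasurableSet E) (hfE : ∀ᵐ ω ∂μ, ω ∈ S → f ω ≤ μ[E.indicator 1 | m] ω) :
    ∫ ω in S, f ω ^ 2 ∂μ ≤ ∫ ω in S ∩ E, f ω ∂μ := by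
  have hfm : AEStronglyMeasurable f μ := (hf.mono hm).aestronglyMeasurable
  have hf_bdd : ∀ᵐ ω ∂μ, ‖f ω‖ ≤ 1 := .of_forall fun ω => by
    rw [Real.norm_eq_abs, abs_le]; exact ⟨by linarith [hf0 ω], hf1 ω⟩
  have hf_int : Integrable f μ := .of_bound hfm 1 hf_bdd
  have hE_int : Integrable (E.indicator 1) μ := (integrable_const (1 : ℝ)).indicator hE
  have hmul : f * E.indicator 1 = E.indicator f := by
    ext ω; by_cases hω : ω ∈ E <;> simp [hω]
  calc ∫ ω in S, f ω ^ 2 ∂μ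
      = ∫ ω in S, f ω * f ω ∂μ := by simp only [sq]
    _ ≤ ∫ ω in S, f ω * μ[E.indicator 1 | m] ω ∂μ :=
        setIntegral_mono_on_ae (hf_int.bdd_mul hfm hf_bdd).integrableOn
          (integrable_condExp.bdd_mul hfm hf_bdd).integrableOn (hm S hS)
          (hfE.mono fun ω hω hωS => mul_le_mul_of_nonneg_left (hω hωS) (hf0 ω))
    _ = ∫ ω in S, μ[f * E.indicator 1 | m] ω ∂μ :=
        integral_congr_ae (ae_restrict_of_ae
          (condExp_stronglyMeasurable_mul_of_bound hm hf hE_int 1 hf_bdd).symm)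
    _ = ∫ ω in S, E.indicator f ω ∂μ := by
        rw [setIntegral_condExp hm (hmul ▸ hf_int.indicator hE) hS, hmul]
    _ = ∫ ω in S ∩ E, f ω ∂μ := setIntegral_indicator hE

/-- The weight `κ ^ (1 + t - n) 1_{n ≤ t}` of the paper. At `t = ⊤` the junk value `⊤.toNat = 0`
makes it meaningless, so it is only ever integrated over `{τ ≠ ⊤}`. -/
def tailWeight (κ : ℝ) (n : ℕ) (t : ℕ∞) : ℝ :=
  if n ≤ t.toNat then κ ^ (t.toNat + 1 - n) else 0

lemma tailWeight_nonneg {κ : ℝ} (hκ0 : 0 ≤ κ) (n : ℕ) (t : ℕ∞) : 0 ≤ tailWeight κ n t := by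
  unfold tailWeight; split_ifs <;> positivity

lemma tailWeight_le_one {κ : ℝ} (hκ0 : 0 ≤ κ) (hκ1 : κ ≤ 1) (n : ℕ) (t : ℕ∞) :
    tailWeight κ n t ≤ 1 := by
  unfold tailWeight; split_ifs
  · exact pow_le_one₀ hκ0 hκ1
  · exact zero_le_one

lemma sum_tailWeight_le_one {κ : ℝ} (hκ0 : 0 ≤ κ) (hκ : κ ≤ 1 / 2) (s : Finset ℕ) (t : ℕ∞) :
    ∑ n ∈ s, tailWeight κ n t ≤ 1 := by
  set T := t.toNat
  calc ∑ n ∈ s, tailWeight κ n t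
      = ∑ n ∈ s with n ≤ T, κ ^ (T + 1 - n) := (Finset.sum_filter _ _).symm
    _ ≤ ∑ n ∈ Finset.range (T + 1), κ ^ (T + 1 - n) :=
        Finset.sum_le_sum_of_subset_of_nonneg
          (fun n hn => Finset.mem_range_succ_iff.2 (Finset.mem_filter.1 hn).2)
          (fun _ _ _ => pow_nonneg hκ0 _)
    _ = ∑ j ∈ Finset.range (T + 1), κ * κ ^ j := by
        rw [← Finset.sum_range_reflect]
        refine Finset.sum_congr rfl fun j hj => ?_
        rw [← pow_succ']
        have := Finset.mem_range.1 hj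
        congr 1
        omega
    _ = κ * ∑ j ∈ Finset.Ico 0 (T + 1), κ ^ j := by rw [Finset.mul_sum, Finset.range_eq_Ico]
    _ ≤ κ * (κ ^ 0 / (1 - κ)) :=
        mul_le_mul_of_nonneg_left (geom_sum_Ico_le_of_lt_one hκ0 (by linarith)) hκ0
    _ ≤ 1 := by
        rw [pow_zero, mul_one_div, div_le_one (by linarith)]
        linarith

section

variable {Ω : Type*} {m0 : MeasurableSpace Ω} {μ : Measure Ω} [IsFiniteMeasure μ]
  {τ : Ω → ℕ∞} {κ : ℝ}

lemma measurableSet_natCast_le_and_le {Θ : Ω → ℕ} (hτ : Measurable τ) (hΘ : Measurable Θ)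
    (n : ℕ) : MeasurableSet {ω | (n : ℕ∞) ≤ τ ω ∧ τ ω ≤ ((n + Θ ω - 1 : ℕ) : ℕ∞)} :=
  (hτ.prodMk hΘ) (.of_discrete
    (s := {p : ℕ∞ × ℕ | (n : ℕ∞) ≤ p.1 ∧ p.1 ≤ ((n + p.2 - 1 : ℕ) : ℕ∞)}))

lemma integrable_tailWeight (hτ : Measurable τ) (hκ0 : 0 ≤ κ) (hκ1 : κ ≤ 1) (n : ℕ) :
    Integrable (fun ω => tailWeight κ n (τ ω)) μ :=
  .of_bound ((Measurable.of_discrete (f := tailWeight κ n)).comp hτ).aestronglyMeasurable 1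
    (.of_forall fun ω => by
      rw [Real.norm_of_nonneg (tailWeight_nonneg hκ0 n _)]
      exact tailWeight_le_one hκ0 hκ1 n _)

lemma sum_setIntegral_tailWeight_le (hτ : Measurable τ) (hκ0 : 0 ≤ κ) (hκ : κ ≤ 1 / 2)
    (s : Finset ℕ) :
    ∑ n ∈ s, ∫ ω in {ω | τ ω ≠ ⊤}, tailWeight κ n (τ ω) ∂μ ≤ μ.real {ω | τ ω ≠ ⊤} := by
  have hint n := integrable_tailWeight (μ := μ) hτ hκ0 (by linarith) n
  rw [← integral_finsetSum s fun n _ => (hint n).integrableOn]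
  calc _ ≤ ∫ ω in {ω | τ ω ≠ ⊤}, (1 : ℝ) ∂μ :=
        setIntegral_mono (integrable_finsetSum s fun n _ => hint n).integrableOn
          (integrable_const 1) fun ω => sum_tailWeight_le_one hκ0 hκ s _
    _ = μ.real {ω | τ ω ≠ ⊤} := by simp

lemma setIntegral_pow_le_setIntegral_tailWeight (hτ : Measurable τ) (hκ0 : 0 ≤ κ) (hκ1 : κ ≤ 1)
    {Θ : Ω → ℕ} (hΘ : Measurable Θ) {n : ℕ} (hn : 1 ≤ n) :
    ∫ ω in {ω | (n : ℕ∞) ≤ τ ω ∧ τ ω ≤ ((n + Θ ω - 1 : ℕ) : ℕ∞)}, κ ^ Θ ω ∂μ ≤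
      ∫ ω in {ω | τ ω ≠ ⊤}, tailWeight κ n (τ ω) ∂μ := by
  set E := {ω | (n : ℕ∞) ≤ τ ω ∧ τ ω ≤ ((n + Θ ω - 1 : ℕ) : ℕ∞)}
  have hEτ : E ⊆ {ω | τ ω ≠ ⊤} := fun ω hω => ne_top_of_le_ne_top (ENat.natCast_ne_top _) hω.2
  have hint := integrable_tailWeight (μ := μ) hτ hκ0 hκ1 n
  have hΘint : Integrable (fun ω => κ ^ Θ ω) μ :=
    .of_bound ((Measurable.of_discrete.comp hΘ).aestronglyMeasurable) 1 (.of_forall fun ω => by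
      rw [norm_pow, Real.norm_of_nonneg hκ0]; exact pow_le_one₀ hκ0 hκ1)
  calc _ ≤ ∫ ω in E, tailWeight κ n (τ ω) ∂μ := by
        refine setIntegral_mono_on hΘint.integrableOn hint.integrableOn
          (measurableSet_natCast_le_and_le hτ hΘ n) fun ω hω => ?_
        obtain ⟨t, ht⟩ := ENat.ne_top_iff_exists.1 (hEτ hω)
        obtain ⟨hnt, htΘ⟩ : n ≤ t ∧ t ≤ n + Θ ω - 1 := by
          simpa only [E, Set.mem_ofPred_eq, ← ht, Nat.cast_le] using hω
        rw [← ht, tailWeight, ENat.toNat_natCast, if_pos hnt]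
        exact pow_le_pow_of_le_one hκ0 hκ1 (by omega)
    _ ≤ _ :=
        setIntegral_mono_set hint.integrableOn
          (.of_forall fun ω => tailWeight_nonneg hκ0 n _) hEτ.eventuallyLE

theorem sum_setIntegral_pow_sq_le_measureReal_ne_top (ℱ : Filtration ℕ m0)
    (hτ : IsStoppingTime ℱ τ) (hκ0 : 0 ≤ κ) (hκ : κ ≤ 1 / 2) {Θ : ℕ → Ω → ℕ}
    (hΘmeas : ∀ n : ℕ, 1 ≤ n → Measurable[ℱ (n - 1)] (Θ n))
    (hcond : ∀ n : ℕ, 1 ≤ n → ∀ᵐ ω ∂μ, (n : ℕ∞) ≤ τ ω →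
      κ ^ (Θ n ω) ≤
        (μ[fun ω' => (if (n : ℕ∞) ≤ τ ω' ∧ τ ω' ≤ ((n + Θ n ω' - 1 : ℕ) : ℕ∞)
            then (1 : ℝ) else 0) | ℱ (n - 1)]) ω) (N : ℕ) :
    ∑ n ∈ Finset.Icc 1 N, ∫ ω in {ω | (n : ℕ∞) ≤ τ ω}, (κ ^ Θ n ω) ^ 2 ∂μ ≤
      μ.real {ω | τ ω ≠ ⊤} := by
  have hκ1 : κ ≤ 1 := by linarith
  have hτm := hτ.measurable_enat
  refine le_trans (Finset.sum_le_sum fun n hnN => ?_) (sum_setIntegral_tailWeight_le hτm hκ0 hκ _)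
  have hn : 1 ≤ n := (Finset.mem_Icc.1 hnN).1
  set E := {ω | (n : ℕ∞) ≤ τ ω ∧ τ ω ≤ ((n + Θ n ω - 1 : ℕ) : ℕ∞)}
  have hΘ : Measurable (Θ n) := (hΘmeas n hn).mono (ℱ.le _) le_rfl
  have hind : (fun ω' => if (n : ℕ∞) ≤ τ ω' ∧ τ ω' ≤ ((n + Θ n ω' - 1 : ℕ) : ℕ∞)
      then (1 : ℝ) else 0) = E.indicator 1 := by
    ext ω; simp [E, Set.indicator_apply]
  calc _ ≤ ∫ ω in {ω | (n : ℕ∞) ≤ τ ω} ∩ E, κ ^ Θ n ω ∂μ :=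
        setIntegral_sq_le_setIntegral_inter_of_le_condExp (ℱ.le _)
          (Measurable.of_discrete.comp (hΘmeas n hn)).stronglyMeasurable
          (fun ω => pow_nonneg hκ0 _) (fun ω => pow_le_one₀ hκ0 hκ1)
          (hτ.measurableSet_natCast_le hn) (measurableSet_natCast_le_and_le hτm hΘ n)
          (hind ▸ hcond n hn)
    _ = ∫ ω in E, κ ^ Θ n ω ∂μ := by rw [Set.inter_eq_right.2 fun ω hω => hω.1]
    _ ≤ _ := setIntegral_pow_le_setIntegral_tailWeight hτm hκ0 hκ1 hΘ hn

end

lemma two_rpow_one_sub_rpow_eq {κ q : ℝ} (hκ : 0 < κ) (hq : (2 : ℝ) ^ (q / 2) * κ = κ⁻¹)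
    (θ : ℕ) : ((2 : ℝ) ^ ((1 : ℝ) - θ)) ^ (q / 2) = (2 : ℝ) ^ (q / 2) * (κ ^ θ) ^ 2 := by
  have hc : (2 : ℝ) ^ (q / 2) = (κ ^ 2)⁻¹ := by
    field_simp at hq ⊢
    linarith
  rw [← Real.rpow_mul zero_le_two, mul_comm, Real.rpow_mul zero_le_two, hc,
    Real.rpow_sub (by positivity), Real.rpow_one, Real.rpow_natCast, div_eq_mul_inv,
    inv_pow, inv_inv, ← pow_mul, ← pow_mul, mul_comm 2 θ]

theorem statement19_general
    {Ω : Type*} {m0 : MeasurableSpace Ω} (μ : Measure Ω) [IsProbabilityMeasure μ]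
    (ℱ : Filtration ℕ m0) (W : ℕ → Ω → ℝ)
    (hadapted : Adapted ℱ W)
    (A : ℝ)
    (τ : Ω → ℕ∞)
    (hτ : ∀ ω, τ ω = sInf {t : ℕ∞ | ∃ n : ℕ, t = n ∧ 1 ≤ n ∧ A ≤ W n ω})
    (κ : ℝ) (hκ0 : 0 < κ) (hκhalf : κ ≤ 1 / 2)
    (Θ : ℕ → Ω → ℕ)
    (hΘmeas : ∀ n : ℕ, 1 ≤ n → Measurable[ℱ (n - 1)] (Θ n))
    (hcond : ∀ n : ℕ, 1 ≤ n → ∀ᵐ ω ∂μ, (n : ℕ∞) ≤ τ ω →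
      κ ^ (Θ n ω) ≤
        (μ[fun ω' => (if (n : ℕ∞) ≤ τ ω' ∧ τ ω' ≤ ((n + Θ n ω' - 1 : ℕ) : ℕ∞)
            then (1 : ℝ) else 0) | ℱ (n - 1)]) ω)
    (q : ℝ) (hq : (2 : ℝ) ^ (q / 2) * κ = κ⁻¹) :
    ∀ N : ℕ, ∑ n ∈ Finset.Icc 1 N,
        ∫ ω in {ω | (n : ℕ∞) ≤ τ ω}, ((2 : ℝ) ^ ((1 : ℝ) - (Θ n ω : ℝ))) ^ (q / 2) ∂μ ≤
      (2 : ℝ) ^ (q / 2) * (μ {ω | τ ω ≠ ⊤}).toReal := by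
  intro N
  have hτ_stop : IsStoppingTime ℱ τ := by
    have : τ = hittingAfter W (Set.Ici A) 1 :=
      funext fun ω => (hτ ω).trans (sInf_natCast_eq_hittingAfter W (Set.Ici A) 1 ω)
    exact this ▸ hadapted.isStoppingTime_hittingAfter measurableSet_Ici
  calc _ = (2 : ℝ) ^ (q / 2) * ∑ n ∈ Finset.Icc 1 N,
        ∫ ω in {ω | (n : ℕ∞) ≤ τ ω}, (κ ^ Θ n ω) ^ 2 ∂μ := by
        simp only [two_rpow_one_sub_rpow_eq hκ0 hq, integral_const_mul, Finset.mul_sum]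
    _ ≤ (2 : ℝ) ^ (q / 2) * μ.real {ω | τ ω ≠ ⊤} :=
        mul_le_mul_of_nonneg_left
          (sum_setIntegral_pow_sq_le_measureReal_ne_top ℱ hτ_stop hκ0.le hκhalf hΘmeas hcond N)
          (by positivity)

/-- chaining bound: if on `{τ ≥ n}` the conditional probability that
`τ ∈ [n, n+Θ_n−1]` given `F_{n-1}` is at least `κ^{Θ_n}`, with `κ ∈ (0,1/2]` and
`2^{q/2} κ = κ⁻¹`, then `Σ_{n≥1} E[(2^{1−Θ_n})^{q/2} 1_{τ ≥ n}] ≤ 2^{q/2} P(τ < ∞)`. -/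
theorem statement19
    {Ω : Type*} {m0 : MeasurableSpace Ω} (μ : Measure Ω) [IsProbabilityMeasure μ]
    (ℱ : Filtration ℕ m0) (W : ℕ → Ω → ℝ)
    (hadapted : Adapted ℱ W)
    (hnonneg : ∀ n ω, 0 ≤ W n ω)
    (hW0 : ∀ ω, W 0 ω = 1)
    (A : ℝ) (hA : 1 < A)
    (τ : Ω → ℕ∞)
    (hτ : ∀ ω, τ ω = sInf {t : ℕ∞ | ∃ n : ℕ, t = n ∧ 1 ≤ n ∧ A ≤ W n ω})
    (κ : ℝ) (hκ0 : 0 < κ) (hκhalf : κ ≤ 1 / 2)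
    (Θ : ℕ → Ω → ℕ)
    (hΘpos : ∀ n ω, 1 ≤ Θ n ω)
    (hΘmeas : ∀ n : ℕ, 1 ≤ n → Measurable[ℱ (n - 1)] (Θ n))
    (hcond : ∀ n : ℕ, 1 ≤ n → ∀ᵐ ω ∂μ, (n : ℕ∞) ≤ τ ω →
      κ ^ (Θ n ω) ≤
        (μ[fun ω' => (if (n : ℕ∞) ≤ τ ω' ∧ τ ω' ≤ ((n + Θ n ω' - 1 : ℕ) : ℕ∞)
            then (1 : ℝ) else 0) | ℱ (n - 1)]) ω)
    (q : ℝ) (hq : (2 : ℝ) ^ (q / 2) * κ = κ⁻¹) :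
    ∀ N : ℕ, ∑ n ∈ Finset.Icc 1 N,
        ∫ ω in {ω | (n : ℕ∞) ≤ τ ω}, ((2 : ℝ) ^ ((1 : ℝ) - (Θ n ω : ℝ))) ^ (q / 2) ∂μ ≤
      (2 : ℝ) ^ (q / 2) * (μ {ω | τ ω ≠ ⊤}).toReal :=
  statement19_general μ ℱ W hadapted A τ hτ κ hκ0 hκhalf Θ hΘmeas hcond q hq
end
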